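/- arXiv:2102.03677 — 2 statements merged into one kernel-verified Lean document; each statement's English description precedes it below -/
import Mathlib

section
/- Let d ≥ 1, σ ∈ (0,1/4) and C > 0. Then there exist constants λ** > 0 and C′ > 0, depending only on d, σ and C, such that the following holds. Suppose Λ is a real-valued C² function on {k ∈ ℝ^d : |k| ≥ 1} satisfying |D^m(Λ(k) − |k|²)| ≤ C·|k|^{−(2−σ)+σ|m|} for all multi-indices m with |m| ≤ 2 and all |k| ≥ 1. Then for every z ∈ ℝ^d with |z|² > λ** there exists exactly one point k₀ in the ball {k : |k − z/2| ≤ |z|/8} such that ∇Λ(k₀) = z, and this point satisfies |k₀ − z/2| ≤ C′·|z|^{−(2−2σ)}. -/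
/-!
Write `Λ(k) = ‖k‖² + R(k)`. On the ball `B = closedBall (z/2) (‖z‖/8)` every `k` has
`‖k‖ ≥ 3‖z‖/8`, so the estimates on `R` give `‖∇R‖ = O(‖z‖^{-(2-2σ)})` and
`‖D²R‖ = O(‖z‖^{-(2-3σ)}) ≤ 1` on `B` once `‖z‖` is large. Since `∇Λ(k) = ∇R(k) + 2k`, the
equation `∇Λ(k) = z` says that `k` is a fixed point of `T(k) = z/2 − ∇R(k)/2`, which maps `B`
into itself and is `1/2`-Lipschitz there. Banach's fixed-point theorem gives the unique
solution `k₀`, and `‖k₀ − z/2‖ = ‖∇R(k₀)‖/2` is the claimed bound.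
-/

open MeasureTheory

noncomputable section

/-- The partial derivative in the `i`-th coordinate direction. -/
def pd {d : ℕ} {F : Type*} [NormedAddCommGroup F] [NormedSpace ℝ F]
    (i : Fin d) (f : EuclideanSpace ℝ (Fin d) → F) : EuclideanSpace ℝ (Fin d) → F :=
  fun x => fderiv ℝ f x (EuclideanSpace.single i 1)

/-- The iterated partial derivative `D^m = ∂₁^{m₁} ⋯ ∂_d^{m_d}` for a multi-index `m`. -/
def Dm {d : ℕ} {F : Type*} [NormedAddCommGroup F] [NormedSpace ℝ F]
    (m : Fin d → ℕ) (f : EuclideanSpace ℝ (Fin d) → F) : EuclideanSpace ℝ (Fin d) → F :=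
  ((List.ofFn fun i : Fin d => (pd i)^[m i]).foldr (· ∘ ·) id) f

open Metric Set InnerProductSpace
open scoped NNReal

theorem existsUnique_eq_add_of_lipschitzOnWith {E : Type*} [NormedAddCommGroup E]
    [CompleteSpace E] {h : E → E} {c : E} {r : ℝ} {K : ℝ≥0} (hK : K < 1) (hr : 0 ≤ r)
    (hlip : LipschitzOnWith K h (closedBall c r)) (hle : ∀ k ∈ closedBall c r, ‖h k‖ ≤ r) :
    ∃! k, k ∈ closedBall c r ∧ k = c + h k := by
  have hT : LipschitzOnWith K (fun k => c + h k) (closedBall c r) :=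
    LipschitzOnWith.of_dist_le_mul fun x hx y hy => by
      simpa only [dist_add_left] using hlip.dist_le_mul x hx y hy
  have hmaps : MapsTo (fun k => c + h k) (closedBall c r) (closedBall c r) := fun k hk => by
    simpa [dist_eq_norm] using hle k hk
  obtain ⟨k₀, hk₀, hfix, -⟩ := ContractingWith.exists_fixedPoint'
    isClosed_closedBall.isComplete hmaps ⟨hK, hmaps.lipschitzOnWith_iff_restrict.mp hT⟩
    (mem_closedBall_self hr) (edist_ne_top _ _)
  refine ⟨k₀, ⟨hk₀, hfix.symm⟩, fun k ⟨hk, hkfix⟩ => ?_⟩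
  have hcontr := hT.dist_le_mul k hk k₀ hk₀
  rw [← hkfix, hfix.eq] at hcontr
  have hK' : (K : ℝ) < 1 := hK
  exact dist_le_zero.mp (by nlinarith [dist_nonneg (x := k) (y := k₀)])

theorem add_two_smul_eq_iff {V : Type*} [AddCommGroup V] [Module ℝ V] {g k z : V} :
    g + (2 : ℝ) • k = z ↔ k = (1 / 2 : ℝ) • z + -(1 / 2 : ℝ) • g := by
  constructor <;> rintro rfl <;> module

theorem gradient_eq_gradient_sub_norm_sq_add {E : Type*} [NormedAddCommGroup E]
    [InnerProductSpace ℝ E] [CompleteSpace E] {Λ : E → ℝ} {k : E}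
    (hΛ : DifferentiableAt ℝ Λ k) :
    gradient Λ k = gradient (fun x => Λ x - ‖x‖ ^ 2) k + (2 : ℝ) • k := by
  have hR : fderiv ℝ (fun x => Λ x - ‖x‖ ^ 2) k = fderiv ℝ Λ k - 2 • innerSL ℝ k := by
    rw [fderiv_fun_sub hΛ ((contDiff_norm_sq ℝ).differentiable two_ne_zero k), fderiv_norm_sq_apply]
  apply (toDual ℝ E).injective
  rw [map_add, toDual_gradient, toDual_gradient, hR]
  ext v
  simp [two_smul]

theorem exists_gradient_eq_of_norm_fderiv_sub_norm_sq_le {E : Type*} [NormedAddCommGroup E]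
    [InnerProductSpace ℝ E] [CompleteSpace E] {Λ : E → ℝ} {z : E} {r δ : ℝ}
    (hr : 0 ≤ r) (hδr : δ ≤ r) (hΛ : ∀ k ∈ closedBall ((1 / 2 : ℝ) • z) r, ContDiffAt ℝ 2 Λ k)
    (hR₁ : ∀ k ∈ closedBall ((1 / 2 : ℝ) • z) r, ‖fderiv ℝ (fun x => Λ x - ‖x‖ ^ 2) k‖ ≤ 2 * δ)
    (hR₂ : ∀ k ∈ closedBall ((1 / 2 : ℝ) • z) r,
      ‖fderiv ℝ (fderiv ℝ (fun x => Λ x - ‖x‖ ^ 2)) k‖ ≤ 1) :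
    ∃ k₀, (k₀ ∈ closedBall ((1 / 2 : ℝ) • z) r ∧ gradient Λ k₀ = z ∧
        ‖k₀ - (1 / 2 : ℝ) • z‖ ≤ δ) ∧
      ∀ k ∈ closedBall ((1 / 2 : ℝ) • z) r, gradient Λ k = z → k = k₀ := by
  set R : E → ℝ := fun x => Λ x - ‖x‖ ^ 2
  set s := closedBall ((1 / 2 : ℝ) • z) r
  set h : E → E := fun k => -(1 / 2 : ℝ) • gradient R k
  have hR : ∀ k ∈ s, ContDiffAt ℝ 2 R k := fun k hk =>
    (hΛ k hk).sub (contDiff_norm_sq ℝ).contDiffAt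
  have hcrit : ∀ k ∈ s, gradient Λ k = z ↔ k = (1 / 2 : ℝ) • z + h k := by
    intro k hk
    rw [gradient_eq_gradient_sub_norm_sq_add ((hΛ k hk).differentiableAt two_ne_zero)]
    exact add_two_smul_eq_iff
  have hnorm_h : ∀ k ∈ s, ‖h k‖ ≤ δ := fun k hk => by
    rw [norm_smul, gradient, LinearIsometryEquiv.norm_map]
    norm_num
    linarith [hR₁ k hk]
  have hlip_fderiv : LipschitzOnWith 1 (fderiv ℝ R) s :=
    (convex_closedBall _ _).lipschitzOnWith_of_nnnorm_fderiv_le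
      (fun k hk => ((hR k hk).fderiv_right (m := 1) le_rfl).differentiableAt one_ne_zero)
      (fun k hk => by simpa [← NNReal.coe_le_coe] using hR₂ k hk)
  have hlip : LipschitzOnWith (1 / 2) h s := LipschitzOnWith.of_dist_le_mul fun x hx y hy => by
    simp only [h, dist_smul₀, gradient, LinearIsometryEquiv.dist_map]
    have := hlip_fderiv.dist_le_mul x hx y hy
    norm_num at this ⊢
    linarith
  obtain ⟨k₀, ⟨hk₀, hfix⟩, huniq⟩ := existsUnique_eq_add_of_lipschitzOnWith
    (by norm_num) hr hlip fun k hk => (hnorm_h k hk).trans hδr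
  refine ⟨k₀, ⟨hk₀, (hcrit k₀ hk₀).mpr hfix, ?_⟩, fun k hk hkz => huniq k ⟨hk, (hcrit k hk).mp hkz⟩⟩
  rw [hfix, add_sub_cancel_left]
  exact hnorm_h k₀ hk₀

theorem norm_ge_of_mem_closedBall_half_smul {E : Type*} [NormedAddCommGroup E] [NormedSpace ℝ E]
    {z k : E} (hk : k ∈ closedBall ((1 / 2 : ℝ) • z) (‖z‖ / 8)) : 3 * ‖z‖ / 8 ≤ ‖k‖ := by
  have := norm_sub_norm_le ((1 / 2 : ℝ) • z) k
  rw [mem_closedBall_iff_norm] at hk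
  rw [norm_sub_rev, norm_smul] at this
  norm_num at this
  linarith

theorem ContDiffOn.contDiffAt_of_lt_norm {E F : Type*} [NormedAddCommGroup E]
    [NormedSpace ℝ E] [NormedAddCommGroup F] [NormedSpace ℝ F] {n : WithTop ℕ∞} {f : E → F}
    {a : ℝ} {x : E} (hf : ContDiffOn ℝ n f {y | a ≤ ‖y‖}) (hx : a < ‖x‖) :
    ContDiffAt ℝ n f x :=
  hf.contDiffAt <| (continuousAt_const.eventually_lt continuous_norm.continuousAt hx).mono
    fun _ => le_of_lt

section FoldrComp

variable {α : Type*}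

theorem foldr_comp_ofFn_eq_id {n : ℕ} (g : Fin n → α → α) (h : ∀ i, g i = id) :
    (List.ofFn g).foldr (· ∘ ·) id = id := by
  induction n with
  | zero => simp
  | succ n ih =>
    rw [List.ofFn_succ, List.foldr_cons, h 0, ih _ fun i => h i.succ]
    rfl

theorem foldr_comp_ofFn_eq_apply {n : ℕ} (g : Fin n → α → α) (i : Fin n)
    (h : ∀ j, j ≠ i → g j = id) : (List.ofFn g).foldr (· ∘ ·) id = g i := by
  induction n with
  | zero => exact i.elim0
  | succ n ih =>
    rw [List.ofFn_succ, List.foldr_cons]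
    rcases Fin.eq_zero_or_eq_succ i with rfl | ⟨i, rfl⟩
    · rw [foldr_comp_ofFn_eq_id _ fun j => h j.succ (Fin.succ_ne_zero j)]
      rfl
    · rw [h 0 (Fin.succ_ne_zero i).symm,
        ih _ i fun j hj => h j.succ (Fin.succ_injective _ |>.ne hj)]
      rfl

theorem foldr_comp_ofFn_eq_comp {n : ℕ} (g : Fin n → α → α) {i j : Fin n} (hij : i < j)
    (h : ∀ l, l ≠ i → l ≠ j → g l = id) :
    (List.ofFn g).foldr (· ∘ ·) id = g i ∘ g j := by
  induction n with
  | zero => exact i.elim0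
  | succ n ih =>
    obtain ⟨j, rfl⟩ := Fin.eq_succ_of_ne_zero (Fin.pos_iff_ne_zero.mp (i.zero_le.trans_lt hij))
    rw [List.ofFn_succ, List.foldr_cons]
    rcases Fin.eq_zero_or_eq_succ i with rfl | ⟨i, rfl⟩
    · rw [foldr_comp_ofFn_eq_apply _ j fun l hl =>
        h l.succ (Fin.succ_ne_zero l) (Fin.succ_injective _ |>.ne hl)]
    · rw [h 0 (Fin.succ_ne_zero i).symm (Fin.succ_ne_zero j).symm,
        ih _ (Fin.succ_lt_succ_iff.mp hij) fun l hi hj =>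
          h l.succ (Fin.succ_injective _ |>.ne hi) (Fin.succ_injective _ |>.ne hj)]
      rfl

end FoldrComp

section PartialDerivatives

variable {d : ℕ} {F : Type*} [NormedAddCommGroup F] [NormedSpace ℝ F]

theorem Dm_single_one (i : Fin d) (f : EuclideanSpace ℝ (Fin d) → F) :
    Dm (Pi.single i 1) f = pd i f := by
  rw [Dm, foldr_comp_ofFn_eq_apply _ i fun j hj => by simp [Pi.single_eq_of_ne hj]]
  simp

theorem Dm_single_two (i : Fin d) (f : EuclideanSpace ℝ (Fin d) → F) :
    Dm (Pi.single i 2) f = pd i (pd i f) := by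
  rw [Dm, foldr_comp_ofFn_eq_apply _ i fun j hj => by simp [Pi.single_eq_of_ne hj]]
  simp

theorem Dm_single_add_single {i j : Fin d} (hij : i < j) (f : EuclideanSpace ℝ (Fin d) → F) :
    Dm (Pi.single i 1 + Pi.single j 1) f = pd i (pd j f) := by
  rw [Dm, foldr_comp_ofFn_eq_comp _ hij fun l hi hj => by
    simp [Pi.single_eq_of_ne hi, Pi.single_eq_of_ne hj]]
  simp [Pi.single_eq_of_ne hij.ne, Pi.single_eq_of_ne hij.ne']

theorem pd_pd_apply {f : EuclideanSpace ℝ (Fin d) → ℝ} {k : EuclideanSpace ℝ (Fin d)}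
    (hf : ContDiffAt ℝ 2 f k) (i j : Fin d) :
    pd i (pd j f) k =
      fderiv ℝ (fderiv ℝ f) k (EuclideanSpace.single i 1) (EuclideanSpace.single j 1) := by
  have hdf : DifferentiableAt ℝ (fderiv ℝ f) k :=
    (hf.fderiv_right (m := 1) le_rfl).differentiableAt one_ne_zero
  change fderiv ℝ (fun y => fderiv ℝ f y (EuclideanSpace.single j 1)) k _ = _
  simp [fderiv_clm_apply hdf (differentiableAt_const _)]

theorem exists_Dm_eq_fderiv_fderiv_apply {f : EuclideanSpace ℝ (Fin d) → ℝ}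
    {k : EuclideanSpace ℝ (Fin d)} (hf : ContDiffAt ℝ 2 f k) (i j : Fin d) :
    ∃ m : Fin d → ℕ, ∑ l, m l = 2 ∧ Dm m f k =
      fderiv ℝ (fderiv ℝ f) k (EuclideanSpace.single i 1) (EuclideanSpace.single j 1) := by
  rcases lt_trichotomy i j with hij | rfl | hji
  · exact ⟨Pi.single i 1 + Pi.single j 1, by simp [Finset.sum_add_distrib],
      by rw [Dm_single_add_single hij, pd_pd_apply hf]⟩
  · exact ⟨Pi.single i 2, by simp, by rw [Dm_single_two, pd_pd_apply hf]⟩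
  · refine ⟨Pi.single j 1 + Pi.single i 1, by simp [Finset.sum_add_distrib], ?_⟩
    rw [Dm_single_add_single hji, pd_pd_apply hf,
      hf.isSymmSndFDerivAt (by simp [minSmoothness_of_isRCLikeNormedField])]

theorem ContinuousLinearMap.opNorm_le_card_mul_of_norm_apply_single_le
    (A : EuclideanSpace ℝ (Fin d) →L[ℝ] F) {B : ℝ} (hB : 0 ≤ B)
    (h : ∀ i, ‖A (EuclideanSpace.single i 1)‖ ≤ B) : ‖A‖ ≤ d * B := by
  refine A.opNorm_le_bound (by positivity) fun u => ?_
  have hAu : A u = ∑ i, u i • A (EuclideanSpace.single i 1) := by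
    conv_lhs => rw [← (EuclideanSpace.basisFun (Fin d) ℝ).sum_repr u]
    simp [map_sum]
  calc ‖A u‖ ≤ ∑ i, ‖u i • A (EuclideanSpace.single i 1)‖ := hAu ▸ norm_sum_le _ _
    _ ≤ ∑ _i : Fin d, ‖u‖ * B := Finset.sum_le_sum fun i _ => by
        rw [norm_smul]
        exact mul_le_mul (PiLp.norm_apply_le u i) (h i) (norm_nonneg _) (norm_nonneg _)
    _ = d * B * ‖u‖ := by
        rw [Finset.sum_const, Finset.card_univ, Fintype.card_fin, nsmul_eq_mul]
        ring

end PartialDerivatives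

section SymbolBounds

variable {d : ℕ}

def HasDmBounds (σ C : ℝ) (f : EuclideanSpace ℝ (Fin d) → ℝ) : Prop :=
  ∀ m : Fin d → ℕ, (∑ i, m i) ≤ 2 → ∀ k : EuclideanSpace ℝ (Fin d), 1 ≤ ‖k‖ →
    |Dm m f k| ≤ C * ‖k‖ ^ (-(2 - σ) + σ * ((∑ i, m i : ℕ) : ℝ))

theorem norm_fderiv_le_of_abs_Dm_le {f : EuclideanSpace ℝ (Fin d) → ℝ}
    {k : EuclideanSpace ℝ (Fin d)} {B : ℝ} (hB : 0 ≤ B)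
    (h : ∀ m : Fin d → ℕ, ∑ l, m l = 1 → |Dm m f k| ≤ B) : ‖fderiv ℝ f k‖ ≤ d * B :=
  (fderiv ℝ f k).opNorm_le_card_mul_of_norm_apply_single_le hB fun i => by
    simpa [Dm_single_one, pd] using h (Pi.single i 1) (by simp)

theorem norm_fderiv_fderiv_le_of_abs_Dm_le {f : EuclideanSpace ℝ (Fin d) → ℝ}
    {k : EuclideanSpace ℝ (Fin d)} {B : ℝ} (hf : ContDiffAt ℝ 2 f k) (hB : 0 ≤ B)
    (h : ∀ m : Fin d → ℕ, ∑ l, m l = 2 → |Dm m f k| ≤ B) :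
    ‖fderiv ℝ (fderiv ℝ f) k‖ ≤ d ^ 2 * B := by
  rw [sq, mul_assoc]
  refine (fderiv ℝ (fderiv ℝ f) k).opNorm_le_card_mul_of_norm_apply_single_le (by positivity)
    fun i => ContinuousLinearMap.opNorm_le_card_mul_of_norm_apply_single_le _ hB fun j => ?_
  obtain ⟨m, hm, hDm⟩ := exists_Dm_eq_fderiv_fderiv_apply hf i j
  rw [← hDm, Real.norm_eq_abs]
  exact h m hm

variable {σ C : ℝ} {f : EuclideanSpace ℝ (Fin d) → ℝ} {k : EuclideanSpace ℝ (Fin d)} {ρ : ℝ}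

theorem HasDmBounds.norm_fderiv_le (hf : HasDmBounds σ C f) (hσ : σ ≤ 1) (hC : 0 ≤ C)
    (hρ : 1 ≤ ρ) (hk : ρ ≤ ‖k‖) : ‖fderiv ℝ f k‖ ≤ d * (C * ρ ^ (-(2 - 2 * σ))) :=
  norm_fderiv_le_of_abs_Dm_le (by positivity) fun m hm => calc
    |Dm m f k| ≤ C * ‖k‖ ^ (-(2 - 2 * σ)) := by
      convert hf m (by omega) k (hρ.trans hk) using 3
      rw [hm]
      push_cast
      ring
    _ ≤ C * ρ ^ (-(2 - 2 * σ)) :=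
      mul_le_mul_of_nonneg_left (Real.rpow_le_rpow_of_nonpos (by linarith) hk (by linarith)) hC

theorem HasDmBounds.norm_fderiv_fderiv_le (hf : HasDmBounds σ C f) (hσ : σ ≤ 1 / 3)
    (hC : 0 ≤ C) (hρ : 1 ≤ ρ) (hk : ρ ≤ ‖k‖) (hf₂ : ContDiffAt ℝ 2 f k) :
    ‖fderiv ℝ (fderiv ℝ f) k‖ ≤ d ^ 2 * (C / ρ) :=
  norm_fderiv_fderiv_le_of_abs_Dm_le hf₂ (by positivity) fun m hm => calc
    |Dm m f k| ≤ C * ‖k‖ ^ (-(2 - 3 * σ)) := by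
      convert hf m (by omega) k (hρ.trans hk) using 3
      rw [hm]
      push_cast
      ring
    _ ≤ C * ‖k‖ ^ (-1 : ℝ) := by
      gcongr
      exacts [hρ.trans hk, by linarith]
    _ ≤ C / ρ := by
      rw [Real.rpow_neg_one, div_eq_mul_inv]
      gcongr

end SymbolBounds

theorem exists_gradient_eq_of_hasDmBounds {d : ℕ} {σ C : ℝ} {Λ : EuclideanSpace ℝ (Fin d) → ℝ}
    (hd : 1 ≤ d) (hσ : σ < 1 / 4) (hC : 0 ≤ C) (hΛ : ContDiffOn ℝ 2 Λ {k | 1 ≤ ‖k‖})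
    (hR : HasDmBounds σ C fun k => Λ k - ‖k‖ ^ 2) {z : EuclideanSpace ℝ (Fin d)}
    (hz : d ^ 2 * C + 2 < 3 * ‖z‖ / 8) :
    ∃ k₀, (k₀ ∈ closedBall ((1 / 2 : ℝ) • z) (‖z‖ / 8) ∧ gradient Λ k₀ = z ∧
        ‖k₀ - (1 / 2 : ℝ) • z‖ ≤ d * C / 2 * (3 * ‖z‖ / 8) ^ (-(2 - 2 * σ))) ∧
      ∀ k ∈ closedBall ((1 / 2 : ℝ) • z) (‖z‖ / 8), gradient Λ k = z → k = k₀ := by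
  set ρ := 3 * ‖z‖ / 8 with hρ_def
  have hρ : 1 < ρ := by nlinarith [sq_nonneg (d : ℝ)]
  have hdC : (d : ℝ) * C ≤ d ^ 2 * C := by
    gcongr
    exact_mod_cast Nat.le_self_pow two_ne_zero d
  have hball : ∀ k ∈ closedBall ((1 / 2 : ℝ) • z) (‖z‖ / 8), ρ ≤ ‖k‖ := fun k hk =>
    norm_ge_of_mem_closedBall_half_smul hk
  have hΛ₂ : ∀ k ∈ closedBall ((1 / 2 : ℝ) • z) (‖z‖ / 8), ContDiffAt ℝ 2 Λ k := fun k hk =>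
    hΛ.contDiffAt_of_lt_norm (hρ.trans_le (hball k hk))
  refine exists_gradient_eq_of_norm_fderiv_sub_norm_sq_le (by positivity) ?_ hΛ₂
    (fun k hk => (hR.norm_fderiv_le (by linarith) hC hρ.le (hball k hk)).trans_eq (by ring))
    (fun k hk => (hR.norm_fderiv_fderiv_le (by linarith) hC hρ.le (hball k hk)
      ((hΛ₂ k hk).sub (contDiff_norm_sq ℝ).contDiffAt)).trans ?_)
  · calc d * C / 2 * ρ ^ (-(2 - 2 * σ)) ≤ d * C / 2 * ρ ^ (-1 : ℝ) := by
          gcongr <;> linarith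
      _ = d * C / (2 * ρ) := by rw [Real.rpow_neg_one]; ring
      _ ≤ ‖z‖ / 8 := by
          rw [div_le_iff₀ (by linarith)]
          nlinarith
  · rw [← mul_div_assoc, div_le_one (by linarith)]
    linarith

theorem stmt7_general (d : ℕ) (hd : 1 ≤ d) (σ C : ℝ)
    (hσ' : σ < 1 / 4) (hC : 0 < C) :
    ∃ lamss C' : ℝ, 0 < lamss ∧ 0 < C' ∧
      ∀ Λ : EuclideanSpace ℝ (Fin d) → ℝ,
        ContDiffOn ℝ 2 Λ {k : EuclideanSpace ℝ (Fin d) | 1 ≤ ‖k‖} →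
        (∀ m : Fin d → ℕ, (∑ i, m i) ≤ 2 →
          ∀ k : EuclideanSpace ℝ (Fin d), 1 ≤ ‖k‖ →
            |Dm m (fun k' => Λ k' - ‖k'‖ ^ 2) k|
              ≤ C * ‖k‖ ^ (-(2 - σ) + σ * ((∑ i, m i : ℕ) : ℝ))) →
        ∀ z : EuclideanSpace ℝ (Fin d), lamss < ‖z‖ ^ 2 →
          ∃ k₀ : EuclideanSpace ℝ (Fin d),
            (k₀ ∈ Metric.closedBall ((1 / 2 : ℝ) • z) (‖z‖ / 8) ∧
              gradient Λ k₀ = z ∧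
              ‖k₀ - (1 / 2 : ℝ) • z‖ ≤ C' * ‖z‖ ^ (-(2 - 2 * σ))) ∧
            ∀ k' : EuclideanSpace ℝ (Fin d),
              k' ∈ Metric.closedBall ((1 / 2 : ℝ) • z) (‖z‖ / 8) →
              gradient Λ k' = z → k' = k₀ := by
  refine ⟨(8 / 3 * (d ^ 2 * C + 2)) ^ 2, d * C / 2 * (3 / 8) ^ (-(2 - 2 * σ)),
    by positivity, by positivity, fun Λ hΛ hbound z hz => ?_⟩
  have hz' : d ^ 2 * C + 2 < 3 * ‖z‖ / 8 := by
    have := lt_of_pow_lt_pow_left₀ 2 (norm_nonneg z) hz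
    linarith
  obtain ⟨k₀, ⟨hk₀, hgrad, hdist⟩, huniq⟩ :=
    exists_gradient_eq_of_hasDmBounds hd hσ' hC.le hΛ hbound hz'
  refine ⟨k₀, ⟨hk₀, hgrad, hdist.trans_eq ?_⟩, huniq⟩
  rw [show 3 * ‖z‖ / 8 = 3 / 8 * ‖z‖ by ring, Real.mul_rpow (by norm_num) (norm_nonneg _)]
  ring

/-- the stationary-point lemma: if `Λ` is `C²` on `{|k| ≥ 1}` with
`|D^m(Λ(k) − |k|²)| ≤ C|k|^{−(2−σ)+σ|m|}` for `|m| ≤ 2`, then for `|z|² > λ**` the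
equation `∇Λ(k₀) = z` has exactly one solution in the ball `{|k − z/2| ≤ |z|/8}`, and it
satisfies `|k₀ − z/2| ≤ C′|z|^{−(2−2σ)}`. -/
theorem stmt7 (d : ℕ) (hd : 1 ≤ d) (σ C : ℝ)
    (hσ : 0 < σ) (hσ' : σ < 1 / 4) (hC : 0 < C) :
    ∃ lamss C' : ℝ, 0 < lamss ∧ 0 < C' ∧
      ∀ Λ : EuclideanSpace ℝ (Fin d) → ℝ,
        ContDiffOn ℝ 2 Λ {k : EuclideanSpace ℝ (Fin d) | 1 ≤ ‖k‖} →
        (∀ m : Fin d → ℕ, (∑ i, m i) ≤ 2 →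
          ∀ k : EuclideanSpace ℝ (Fin d), 1 ≤ ‖k‖ →
            |Dm m (fun k' => Λ k' - ‖k'‖ ^ 2) k|
              ≤ C * ‖k‖ ^ (-(2 - σ) + σ * ((∑ i, m i : ℕ) : ℝ))) →
        ∀ z : EuclideanSpace ℝ (Fin d), lamss < ‖z‖ ^ 2 →
          ∃ k₀ : EuclideanSpace ℝ (Fin d),
            (k₀ ∈ Metric.closedBall ((1 / 2 : ℝ) • z) (‖z‖ / 8) ∧
              gradient Λ k₀ = z ∧
              ‖k₀ - (1 / 2 : ℝ) • z‖ ≤ C' * ‖z‖ ^ (-(2 - 2 * σ))) ∧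
            ∀ k' : EuclideanSpace ℝ (Fin d),
              k' ∈ Metric.closedBall ((1 / 2 : ℝ) • z) (‖z‖ / 8) →
              gradient Λ k' = z → k' = k₀ :=
  stmt7_general d hd σ C hσ' hC
end
end

section
/- Let h : [0,∞) → [0,∞) be a measurable function and C₁, C₂ ≥ 0 constants such that h(t) ≤ C₁t² + C₂ for all t ≥ 0. Suppose there exist c > 0 and T₀ > 0 such that (2/T) ∫₀^∞ e^{−2t/T} h(t) dt ≥ c·T² for all T > T₀. Then there exist c′ > 0 and T₀′ > 0 such that (1/T) ∫₀^T h(t) dt ≥ c′·T² for all T > T₀′. -/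
/-!
Split the Abel integral at `K * T`. On `(0, K T]` the weight `exp (-2t/T)` is at most `1`, so
that part is at most the Cesàro integral `∫₀^{KT} h`; by the ballistic upper bound the tail is at
most `(2 C₁ + C₂) T³ exp (-K)`, less than half of the Abel lower bound `c T³ / 2` once `K` is
large. Hence `∫₀^{KT} h ≥ c T³ / 4`, which is a Cesàro lower bound at time `S = K T` with
constant `c / (4 K³)`.
-/

open MeasureTheory Set Filter Topology Real

noncomputable section

lemma sq_mul_exp_neg_le_two {x : ℝ} (hx : 0 ≤ x) : x ^ 2 * exp (-x) ≤ 2 := by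
  have h := pow_div_factorial_le_exp _ hx 2
  rw [Nat.factorial_two, Nat.cast_two, div_le_iff₀ two_pos] at h
  calc x ^ 2 * exp (-x) ≤ exp x * 2 * exp (-x) := by gcongr
    _ = 2 := by rw [mul_right_comm, ← exp_add, add_neg_cancel, exp_zero, one_mul]

lemma exp_mul_quadratic_le {C₁ C₂ T t : ℝ} (hC₁ : 0 ≤ C₁) (hC₂ : 0 ≤ C₂) (hT : 1 ≤ T)
    (ht : 0 ≤ t) :
    exp (-2 * t / T) * (C₁ * t ^ 2 + C₂) ≤ (2 * C₁ + C₂) * T ^ 2 * exp (-T⁻¹ * t) := by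
  have hT0 : 0 < T := one_pos.trans_le hT
  set E := exp (-T⁻¹ * t)
  have hE : exp (-2 * t / T) = E * E := by rw [← exp_add]; ring_nf
  have hE0 : 0 ≤ E := (exp_pos _).le
  have hE1 : E ≤ 1 := exp_le_one_iff.2 (by nlinarith [inv_pos.2 hT0])
  have hsq : t ^ 2 * E ≤ 2 * T ^ 2 := by
    have h := sq_mul_exp_neg_le_two (div_nonneg ht hT0.le)
    rwa [div_pow, div_mul_eq_mul_div, div_le_iff₀ (by positivity), ← inv_mul_eq_div,
      ← neg_mul] at h
  have hT2 : 1 ≤ T ^ 2 := one_le_pow₀ hT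
  rw [hE]
  nlinarith [mul_le_mul_of_nonneg_left hsq (mul_nonneg hC₁ hE0),
    mul_le_mul_of_nonneg_left (hE1.trans hT2) (mul_nonneg hC₂ hE0)]

lemma MeasureTheory.IntegrableOn.of_measurable_of_le {α : Type*} [MeasurableSpace α]
    {μ : Measure α} {f φ : α → ℝ} {s : Set α} (hφ : IntegrableOn φ s μ) (hf : Measurable f)
    (hs : MeasurableSet s) (h0 : ∀ x ∈ s, 0 ≤ f x) (hle : ∀ x ∈ s, f x ≤ φ x) :
    IntegrableOn f s μ := by
  refine hφ.mono' hf.aestronglyMeasurable ?_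
  filter_upwards [ae_restrict_mem hs] with x hx
  rw [Real.norm_of_nonneg (h0 x hx)]
  exact hle x hx

section QuadraticBound

variable {h : ℝ → ℝ} {C₁ C₂ : ℝ}

lemma integrableOn_Ioc_of_le_quadratic (hmeas : Measurable h) (hnonneg : ∀ t, 0 ≤ t → 0 ≤ h t)
    (hupper : ∀ t, 0 ≤ t → h t ≤ C₁ * t ^ 2 + C₂) (S : ℝ) : IntegrableOn h (Ioc 0 S) :=
  (show Continuous fun t : ℝ => C₁ * t ^ 2 + C₂ by fun_prop).integrableOn_Ioc.of_measurable_of_le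
    hmeas measurableSet_Ioc (fun t ht => hnonneg t ht.1.le) fun t ht => hupper t ht.1.le

theorem abel_integral_le_intervalIntegral_add (hmeas : Measurable h)
    (hnonneg : ∀ t, 0 ≤ t → 0 ≤ h t) (hC₁ : 0 ≤ C₁) (hC₂ : 0 ≤ C₂)
    (hupper : ∀ t, 0 ≤ t → h t ≤ C₁ * t ^ 2 + C₂) {T K : ℝ} (hT : 1 ≤ T) (hK : 0 ≤ K) :
    ∫ t in Ioi 0, exp (-2 * t / T) * h t ≤
      (∫ t in (0 : ℝ)..K * T, h t) + (2 * C₁ + C₂) * T ^ 3 * exp (-K) := by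
  have hT0 : 0 < T := one_pos.trans_le hT
  set S := K * T
  have hS : 0 ≤ S := mul_nonneg hK hT0.le
  set g : ℝ → ℝ := fun t => exp (-2 * t / T) * h t
  set φ : ℝ → ℝ := fun t => (2 * C₁ + C₂) * T ^ 2 * exp (-T⁻¹ * t)
  have hg : Measurable g := by fun_prop
  have hg0 : ∀ t ∈ Ioi (0 : ℝ), 0 ≤ g t := fun t ht => mul_nonneg (exp_pos _).le (hnonneg t ht.le)
  have hg_le_h : ∀ t ∈ Ioc 0 S, g t ≤ h t := fun t ht =>
    mul_le_of_le_one_left (hnonneg t ht.1.le)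
      (exp_le_one_iff.2 (div_nonpos_of_nonpos_of_nonneg (by linarith [ht.1]) hT0.le))
  have hg_le_φ : ∀ t ∈ Ioi S, g t ≤ φ t := fun t ht =>
    (mul_le_mul_of_nonneg_left (hupper t (hS.trans ht.le)) (exp_pos _).le).trans
      (exp_mul_quadratic_le hC₁ hC₂ hT (hS.trans ht.le))
  have hh : IntegrableOn h (Ioc 0 S) := integrableOn_Ioc_of_le_quadratic hmeas hnonneg hupper S
  have hφ : IntegrableOn φ (Ioi S) :=
    (integrableOn_exp_mul_Ioi (neg_lt_zero.2 (inv_pos.2 hT0)) S).const_mul _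
  have hφ_integral : ∫ t in Ioi S, φ t = (2 * C₁ + C₂) * T ^ 3 * exp (-K) := by
    rw [integral_const_mul, integral_exp_mul_Ioi (neg_lt_zero.2 (inv_pos.2 hT0)),
      show -T⁻¹ * S = -K by simp only [S]; field_simp]
    field_simp
  have hg_head : IntegrableOn g (Ioc 0 S) := hh.of_measurable_of_le hg measurableSet_Ioc
    (fun t ht => hg0 t ht.1) hg_le_h
  have hg_tail : IntegrableOn g (Ioi S) := hφ.of_measurable_of_le hg measurableSet_Ioi
    (fun t ht => hg0 t (hS.trans_lt ht)) hg_le_φ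
  calc ∫ t in Ioi 0, g t = (∫ t in Ioc 0 S, g t) + ∫ t in Ioi S, g t := by
        rw [← setIntegral_union (Ioc_disjoint_Ioi le_rfl) measurableSet_Ioi hg_head hg_tail,
          Ioc_union_Ioi_eq_Ioi hS]
    _ ≤ (∫ t in Ioc 0 S, h t) + ∫ t in Ioi S, φ t := add_le_add
        (setIntegral_mono_on hg_head hh measurableSet_Ioc hg_le_h)
        (setIntegral_mono_on hg_tail hφ measurableSet_Ioi hg_le_φ)
    _ = _ := by rw [intervalIntegral.integral_of_le hS, hφ_integral]

end QuadraticBound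

lemma cesaro_lower_of_lower_at_dilation {H : ℝ → ℝ} {a K T₁ : ℝ} (hK : 0 < K) (hT₁ : 0 ≤ T₁)
    (hH : ∀ T, T₁ < T → a * T ^ 3 ≤ H (K * T)) (S : ℝ) (hS : K * T₁ < S) :
    a / K ^ 3 * S ^ 2 ≤ 1 / S * H S := by
  have hS0 : 0 < S := (mul_nonneg hK.le hT₁).trans_lt hS
  have h := hH (S / K) (by rwa [lt_div_iff₀' hK])
  rw [mul_div_cancel₀ S hK.ne'] at h
  calc a / K ^ 3 * S ^ 2 = 1 / S * (a * (S / K) ^ 3) := by field_simp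
    _ ≤ 1 / S * H S := by gcongr

theorem stmt9_general (h : ℝ → ℝ) (hmeas : Measurable h)
    (hnonneg : ∀ t : ℝ, 0 ≤ t → 0 ≤ h t)
    (C₁ C₂ : ℝ) (hC₁ : 0 ≤ C₁) (hC₂ : 0 ≤ C₂)
    (hupper : ∀ t : ℝ, 0 ≤ t → h t ≤ C₁ * t ^ 2 + C₂)
    (c T₀ : ℝ) (hc : 0 < c)
    (hlower : ∀ T : ℝ, T₀ < T →
      c * T ^ 2 ≤ (2 / T) * ∫ t in Set.Ioi (0 : ℝ), Real.exp (-2 * t / T) * h t) :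
    ∃ c' T₀' : ℝ, 0 < c' ∧ 0 < T₀' ∧ ∀ T : ℝ, T₀' < T →
      c' * T ^ 2 ≤ (1 / T) * ∫ t in (0 : ℝ)..T, h t := by
  have hdecay : Tendsto (fun K => (2 * C₁ + C₂) * exp (-K)) atTop (𝓝 0) := by
    simpa using tendsto_exp_neg_atTop_nhds_zero.const_mul (2 * C₁ + C₂)
  obtain ⟨K, hK0, hK⟩ := ((eventually_gt_atTop 0).and
    (hdecay.eventually (ge_mem_nhds (by positivity : 0 < c / 4)))).exists
  refine ⟨c / 4 / K ^ 3, K * max T₀ 1, by positivity, by positivity,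
    cesaro_lower_of_lower_at_dilation hK0 (by positivity) fun T hT => ?_⟩
  have hT1 : 1 ≤ T := (le_max_right _ _).trans hT.le
  have habel := hlower T ((le_max_left _ _).trans_lt hT)
  rw [div_mul_eq_mul_div, le_div_iff₀ (by positivity)] at habel
  have hsplit := abel_integral_le_intervalIntegral_add hmeas hnonneg hC₁ hC₂ hupper hT1 hK0.le
  nlinarith [mul_le_mul_of_nonneg_left hK (by positivity : (0 : ℝ) ≤ T ^ 3)]

/-- Under a ballistic upper bound `h(t) ≤ C₁t² + C₂`, an Abel-averaged
ballistic lower bound implies a Cesàro-averaged ballistic lower bound. -/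
theorem stmt9 (h : ℝ → ℝ) (hmeas : Measurable h)
    (hnonneg : ∀ t : ℝ, 0 ≤ t → 0 ≤ h t)
    (C₁ C₂ : ℝ) (hC₁ : 0 ≤ C₁) (hC₂ : 0 ≤ C₂)
    (hupper : ∀ t : ℝ, 0 ≤ t → h t ≤ C₁ * t ^ 2 + C₂)
    (c T₀ : ℝ) (hc : 0 < c) (hT₀ : 0 < T₀)
    (hlower : ∀ T : ℝ, T₀ < T →
      c * T ^ 2 ≤ (2 / T) * ∫ t in Set.Ioi (0 : ℝ), Real.exp (-2 * t / T) * h t) :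
    ∃ c' T₀' : ℝ, 0 < c' ∧ 0 < T₀' ∧ ∀ T : ℝ, T₀' < T →
      c' * T ^ 2 ≤ (1 / T) * ∫ t in (0 : ℝ)..T, h t :=
  stmt9_general h hmeas hnonneg C₁ C₂ hC₁ hC₂ hupper c T₀ hc hlower
end
end
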